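/- Let ℏ, m, g > 0. Let ψ⁽⁰⁾ : ℝ → ℂ be differentiable (function of time t), let c : ℝ → ℂ, and let f : ℝ³ × ℝ → ℂ be smooth; define ψ⁽¹⁾(y,t) = c(t)/|y| + f(y,t) for y ≠ 0. Suppose that for all t the interior–boundary condition c(t) = −(mg/2πℏ²) ψ⁽⁰⁾(t) holds, and that iℏ dψ⁽⁰⁾/dt = (g/4π) ∫_{S²} lim_{r→0} ∂_r (r ψ⁽¹⁾(rω,t)) d²ω and iℏ ∂_t ψ⁽¹⁾(y,t) = −(ℏ²/2m) Δ_y ψ⁽¹⁾(y,t) for all y ≠ 0. Then the gain of probability in the 0-particle sector equals minus the outward flux through small spheres: d|ψ⁽⁰⁾(t)|²/dt = −lim_{r→0} ∫_{S²} r² j_r(rω,t) d²ω, where j_r = (ℏ/m) Im[ψ⁽¹⁾* ∂_r ψ⁽¹⁾]. -/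

import Mathlib

open Complex MeasureTheory Metric Real

/-- The Laplacian of a complex-valued function on `ℝ³`, as the sum of the second
partial derivatives in the coordinate directions. -/
noncomputable def laplacianC (f : EuclideanSpace ℝ (Fin 3) → ℂ)
    (y : EuclideanSpace ℝ (Fin 3)) : ℂ :=
  ∑ i : Fin 3,
    fderiv ℝ (fun z => fderiv ℝ f z (EuclideanSpace.single i 1)) y
      (EuclideanSpace.single i 1)

local notation "E3" => EuclideanSpace ℝ (Fin 3)

private lemma im_calc (c cf d : ℂ) (r : ℝ) (hr : r ≠ 0) :
    r ^ 2 * ((starRingEnd ℂ) (c / (r:ℂ) + cf) * (-(c / (r:ℂ)^2) + d)).im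
    = r * ((starRingEnd ℂ) c * d).im - (c * (starRingEnd ℂ) cf).im
      + r ^ 2 * ((starRingEnd ℂ) cf * d).im := by
  obtain ⟨a, b⟩ := c
  obtain ⟨p, q⟩ := cf
  obtain ⟨u, v⟩ := d
  simp [Complex.ext_iff, Complex.div_re, Complex.div_im, Complex.normSq, pow_two]
  field_simp
  ring

/-- **Probability balance in the particle-creation model truncated at one particle.**
An x-particle is fixed at the origin of `ℝ³`; the wave function has a 0-particle sector
`ψ⁰(t) ∈ ℂ` and a 1-particle sector `ψ¹(y,t) = c(t)/|y| + f(y,t)` (`y ≠ 0`). Under the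
interior–boundary condition `c(t) = −(mg/2πℏ²) ψ⁰(t)` and the evolution equations
`iℏ dψ⁰/dt = (g/4π) ∫_{S²} lim_{r→0} ∂_r(r ψ¹(rω,t)) d²ω` and
`iℏ ∂_t ψ¹ = −(ℏ²/2m) Δψ¹` (for `y ≠ 0`), the gain of probability in the 0-particle
sector equals minus the limiting outward flux through small spheres:
`d|ψ⁰|²/dt = −lim_{r→0} ∫_{S²} r² j_r(rω,t) d²ω` with `j_r = (ℏ/m) Im[ψ¹* ∂_r ψ¹]`. -/
theorem creation_model_probability_balance
    (ℏ m g : ℝ) (hℏ : 0 < ℏ) (hm : 0 < m) (hg : 0 < g)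
    (ψ0 : ℝ → ℂ) (hψ0 : Differentiable ℝ ψ0)
    (c : ℝ → ℂ) (f : EuclideanSpace ℝ (Fin 3) → ℝ → ℂ)
    (hf : ContDiff ℝ (⊤ : ℕ∞) (fun p : EuclideanSpace ℝ (Fin 3) × ℝ => f p.1 p.2))
    (ψ1 : EuclideanSpace ℝ (Fin 3) → ℝ → ℂ)
    (hψ1def : ∀ y : EuclideanSpace ℝ (Fin 3), y ≠ 0 → ∀ t : ℝ,
      ψ1 y t = c t / (‖y‖ : ℝ) + f y t)
    -- interior–boundary condition: c(t) = −(mg/2πℏ²) ψ⁰(t)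
    (hIBC : ∀ t : ℝ, c t = -(m * g / (2 * π * ℏ ^ 2) : ℝ) * ψ0 t)
    -- iℏ dψ⁰/dt = (g/4π) ∫_{S²} lim_{r→0} ∂_r (r ψ¹(rω,t)) d²ω
    (hSch0 : ∀ t : ℝ,
      Complex.I * (ℏ : ℂ) * deriv ψ0 t
        = (g / (4 * π) : ℝ) *
            ∫ ω : sphere (0 : EuclideanSpace ℝ (Fin 3)) 1,
              Filter.limUnder (nhdsWithin 0 (Set.Ioi 0))
                (fun r : ℝ =>
                  deriv (fun s : ℝ =>
                    (s : ℂ) * ψ1 (s • (ω : EuclideanSpace ℝ (Fin 3))) t) r)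
              ∂((volume : Measure (EuclideanSpace ℝ (Fin 3))).toSphere))
    -- iℏ ∂_t ψ¹(y,t) = −(ℏ²/2m) Δ_y ψ¹(y,t) for y ≠ 0
    (hSch1 : ∀ y : EuclideanSpace ℝ (Fin 3), y ≠ 0 → ∀ t : ℝ,
      Complex.I * (ℏ : ℂ) * deriv (fun s => ψ1 y s) t
        = -((ℏ : ℂ) ^ 2 / (2 * (m : ℂ))) * laplacianC (fun z => ψ1 z t) y) :
    ∀ t : ℝ,
      Filter.Tendsto
        (fun r : ℝ =>
          ∫ ω : sphere (0 : EuclideanSpace ℝ (Fin 3)) 1,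
            r ^ 2 *
              ((ℏ / m) *
                ((starRingEnd ℂ) (ψ1 (r • (ω : EuclideanSpace ℝ (Fin 3))) t) *
                  deriv (fun s : ℝ => ψ1 (s • (ω : EuclideanSpace ℝ (Fin 3))) t) r).im)
            ∂((volume : Measure (EuclideanSpace ℝ (Fin 3))).toSphere))
        (nhdsWithin 0 (Set.Ioi 0))
        (nhds (- deriv (fun s => ‖ψ0 s‖ ^ 2) t)) := by
  intro t
  have hπ : (0:ℝ) < π := Real.pi_pos
  set μ := (volume : Measure E3).toSphere with hμ
  set F : E3 → ℂ := fun y => f y t with hFdef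
  have hF : ContDiff ℝ (⊤ : ℕ∞) F := hf.comp (contDiff_id.prodMk contDiff_const : ContDiff ℝ (⊤ : ℕ∞) (fun y : E3 => (y, t)))
  set cc : ℂ := c t with hccdef
  set D : ℝ → sphere (0:E3) 1 → ℂ :=
    fun r ω => fderiv ℝ F (r • (ω : E3)) (ω : E3) with hDdef
  -- basic facts about points s • ω for s > 0
  have hsm : ∀ (ω : sphere (0:E3) 1) (s : ℝ), 0 < s →
      ‖s • (ω : E3)‖ = s ∧ s • (ω : E3) ≠ 0 := by
    intro ω s hs
    have hω : ‖(ω : E3)‖ = 1 := by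
      simpa using mem_sphere_zero_iff_norm.mp ω.2
    constructor
    · rw [norm_smul, hω, Real.norm_eq_abs, abs_of_pos hs, mul_one]
    · rw [← norm_pos_iff, norm_smul, hω, mul_one, Real.norm_eq_abs]
      exact abs_pos.mpr hs.ne'
  -- ψ1 along rays for s > 0
  have hray : ∀ (ω : sphere (0:E3) 1) (s : ℝ), 0 < s →
      ψ1 (s • (ω : E3)) t = cc / (s:ℂ) + F (s • (ω : E3)) := by
    intro ω s hs
    obtain ⟨hn, hne⟩ := hsm ω s hs
    rw [hψ1def _ hne t, hn]
  -- derivative of s ↦ F (s • ω)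
  have hFray : ∀ (ω : sphere (0:E3) 1) (r : ℝ),
      HasDerivAt (fun s : ℝ => F (s • (ω : E3))) (D r ω) r := by
    intro ω r
    have h1 : HasDerivAt (fun s : ℝ => s • (ω : E3)) ((1:ℝ) • (ω : E3)) r :=
      (hasDerivAt_id r).smul_const (ω : E3)
    have h2 := ((hF.differentiable (by simp) (r • (ω : E3))).hasFDerivAt).comp_hasDerivAt r h1
    simpa [hDdef, Function.comp_def] using h2
  -- derivative of s ↦ c/s
  have hinv : ∀ r : ℝ, 0 < r →
      HasDerivAt (fun s : ℝ => cc / (s:ℂ)) (-(cc / (r:ℂ)^2)) r := by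
    intro r hr
    have h1 : HasDerivAt (fun s : ℝ => ((s⁻¹ : ℝ) : ℂ)) (((-(r^2)⁻¹ : ℝ)) : ℂ) r :=
      (hasDerivAt_inv hr.ne').ofReal_comp
    have h2 := h1.const_mul cc
    have he : (fun s : ℝ => cc * ((s⁻¹ : ℝ) : ℂ)) = fun s : ℝ => cc / (s:ℂ) := by
      funext s; push_cast; ring
    rw [he] at h2
    refine h2.congr_deriv ?_
    push_cast; ring
  -- Lemma A: derivative of s ↦ ψ1(s•ω, t) at r > 0
  have hA : ∀ (ω : sphere (0:E3) 1) (r : ℝ), 0 < r →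
      HasDerivAt (fun s : ℝ => ψ1 (s • (ω : E3)) t) (-(cc/(r:ℂ)^2) + D r ω) r := by
    intro ω r hr
    have hd := (hinv r hr).add (hFray ω r)
    refine hd.congr_of_eventuallyEq ?_
    filter_upwards [Ioi_mem_nhds hr] with s hs
    exact hray ω s hs
  -- Lemma B: derivative of s ↦ s ψ1(s•ω, t) at r > 0
  have hB : ∀ (ω : sphere (0:E3) 1) (r : ℝ), 0 < r →
      HasDerivAt (fun s : ℝ => (s:ℂ) * ψ1 (s • (ω : E3)) t)
        (F (r • (ω : E3)) + (r:ℂ) * D r ω) r := by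
    intro ω r hr
    have h1 : HasDerivAt (fun s : ℝ => ((s : ℝ) : ℂ)) ((1:ℝ) : ℂ) r :=
      (hasDerivAt_id r).ofReal_comp
    have h2 := (h1.mul (hFray ω r)).const_add cc
    have hd : HasDerivAt (fun s : ℝ => cc + (s:ℂ) * F (s • (ω : E3)))
        (F (r • (ω : E3)) + (r:ℂ) * D r ω) r := by
      refine h2.congr_deriv ?_
      push_cast; ring
    refine hd.congr_of_eventuallyEq ?_
    filter_upwards [Ioi_mem_nhds hr] with s hs
    rw [hray ω s hs]
    have hs' : (s:ℂ) ≠ 0 := by exact_mod_cast (hs : (0:ℝ) < s).ne'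
    field_simp
  -- joint continuity of D
  have hDC : Continuous (fun p : ℝ × sphere (0:E3) 1 => D p.1 p.2) := by
    have h1 : Continuous (fderiv ℝ F) := hF.continuous_fderiv (by simp)
    exact isBoundedBilinearMap_apply.continuous.comp
      ((h1.comp ((continuous_fst.smul (continuous_subtype_val.comp continuous_snd)))).prodMk
        (continuous_subtype_val.comp continuous_snd))
  -- the limUnder in hSch0 evaluates to F 0
  have hlim : ∀ ω : sphere (0:E3) 1,
      Filter.limUnder (nhdsWithin 0 (Set.Ioi 0))
        (fun r : ℝ => deriv (fun s : ℝ => (s:ℂ) * ψ1 (s • (ω : E3)) t) r) = F 0 := by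
    intro ω
    apply Filter.Tendsto.limUnder_eq
    have hc : Filter.Tendsto (fun r : ℝ => F (r • (ω : E3)) + (r:ℂ) * D r ω)
        (nhdsWithin 0 (Set.Ioi 0)) (nhds (F 0)) := by
      have hcont : Continuous (fun r : ℝ => F (r • (ω : E3)) + (r:ℂ) * D r ω) := by
        refine Continuous.add ?_ ?_
        · exact (hF.continuous).comp (continuous_id.smul continuous_const)
        · exact (Complex.continuous_ofReal).mul
            (hDC.comp (continuous_id.prodMk continuous_const))
      have := (hcont.tendsto 0).mono_left (nhdsWithin_le_nhds : nhdsWithin (0:ℝ) (Set.Ioi 0) ≤ nhds 0)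
      simpa using this
    refine hc.congr' ?_
    filter_upwards [self_mem_nhdsWithin] with r hr
    exact ((hB ω r hr).deriv).symm
  -- total mass
  set κ : ℝ := (μ Set.univ).toReal with hκdef
  -- solve for deriv ψ0 t
  have hInt : (∫ ω : sphere (0:E3) 1,
      Filter.limUnder (nhdsWithin 0 (Set.Ioi 0))
        (fun r : ℝ => deriv (fun s : ℝ => (s:ℂ) * ψ1 (s • (ω : E3)) t) r) ∂μ)
      = (κ : ℂ) * F 0 := by
    have : (fun ω : sphere (0:E3) 1 =>
        Filter.limUnder (nhdsWithin 0 (Set.Ioi 0))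
          (fun r : ℝ => deriv (fun s : ℝ => (s:ℂ) * ψ1 (s • (ω : E3)) t) r))
        = fun _ => F 0 := funext hlim
    rw [this, integral_const, hκdef, real_smul]
    rfl
  have hder : deriv ψ0 t = -Complex.I * ((g * κ / (4 * π * ℏ) : ℝ) : ℂ) * F 0 := by
    have h0 := hSch0 t
    rw [hInt] at h0
    have hIℏ : (Complex.I * (ℏ:ℂ)) ≠ 0 := by
      simp [Complex.I_ne_zero, Complex.ofReal_ne_zero, hℏ.ne']
    apply mul_left_cancel₀ hIℏ
    rw [h0]
    have key : Complex.I * (ℏ:ℂ) * (-Complex.I * ((g * κ / (4 * π * ℏ) : ℝ):ℂ) * F 0)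
        = ((ℏ * (g * κ / (4 * π * ℏ)) : ℝ):ℂ) * F 0 := by
      push_cast
      linear_combination (-((ℏ:ℂ) * ((g:ℂ) * (κ:ℂ) / (4 * (π:ℂ) * (ℏ:ℂ))) * F 0)) *
        Complex.I_sq
    rw [key]
    have hre : ℏ * (g * κ / (4 * π * ℏ)) = g / (4 * π) * κ := by
      field_simp
    rw [hre]
    push_cast
    ring
  -- derivative of ‖ψ0‖²
  have hd0 : HasDerivAt (fun s => ‖ψ0 s‖ ^ 2)
      (2 * ((starRingEnd ℂ) (ψ0 t) * deriv ψ0 t).re) t := by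
    have hψ0' : HasDerivAt ψ0 (deriv ψ0 t) t := (hψ0 t).hasDerivAt
    have hre : HasDerivAt (fun s => (ψ0 s).re) ((deriv ψ0 t).re) t := by
      exact (Complex.reCLM.hasFDerivAt.comp_hasDerivAt t hψ0')
    have him : HasDerivAt (fun s => (ψ0 s).im) ((deriv ψ0 t).im) t := by
      exact (Complex.imCLM.hasFDerivAt.comp_hasDerivAt t hψ0')
    have hsum := (hre.pow 2).add (him.pow 2)
    have he : (fun s => (ψ0 s).re ^ 2 + (ψ0 s).im ^ 2) = fun s => ‖ψ0 s‖ ^ 2 := by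
      funext s
      simp [← Complex.normSq_eq_norm_sq, Complex.normSq_apply]
      ring
    rw [show ((fun s => (ψ0 s).re) ^ 2 + (fun s => (ψ0 s).im) ^ 2) = fun s => ‖ψ0 s‖ ^ 2 from he] at hsum
    refine hsum.congr_deriv ?_
    simp [Complex.mul_re, Complex.conj_re, Complex.conj_im]
    ring
  -- value of the target
  set P : ℝ := ((starRingEnd ℂ) (ψ0 t) * F 0).im with hPdef
  have htv : - deriv (fun s => ‖ψ0 s‖ ^ 2) t = -(g * κ / (2 * π * ℏ)) * P := by
    have h2a : g * κ / (2 * π * ℏ) = 2 * (g * κ / (4 * π * ℏ)) := by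
      field_simp
      ring
    rw [hd0.deriv, hder, h2a]
    set a : ℝ := g * κ / (4 * π * ℏ) with hadef
    simp [hPdef, Complex.mul_re, Complex.mul_im, Complex.conj_re, Complex.conj_im]
    ring
  -- the G function
  set G : ℝ → sphere (0:E3) 1 → ℝ := fun r ω =>
    (ℏ/m) * ( r * ((starRingEnd ℂ) cc * D r ω).im
      - (cc * (starRingEnd ℂ) (F (r • (ω : E3)))).im
      + r^2 * ((starRingEnd ℂ) (F (r • (ω : E3))) * D r ω).im ) with hGdef
  -- pointwise identification of integrand for r > 0
  have hpt : ∀ r : ℝ, 0 < r → ∀ ω : sphere (0:E3) 1,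
      r ^ 2 * ((ℏ / m) *
        ((starRingEnd ℂ) (ψ1 (r • (ω : E3)) t) *
          deriv (fun s : ℝ => ψ1 (s • (ω : E3)) t) r).im) = G r ω := by
    intro r hr ω
    rw [(hA ω r hr).deriv, hray ω r hr, hGdef]
    have := im_calc cc (F (r • (ω : E3))) (D r ω) r hr.ne'
    linear_combination (ℏ/m) * this
  -- joint continuity of G
  have hGc : Continuous (fun p : ℝ × sphere (0:E3) 1 => G p.1 p.2) := by
    have hFc : Continuous (fun p : ℝ × sphere (0:E3) 1 => F (p.1 • (p.2 : E3))) :=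
      hF.continuous.comp (continuous_fst.smul (continuous_subtype_val.comp continuous_snd))
    refine continuous_const.mul ?_
    refine Continuous.add (Continuous.sub ?_ ?_) ?_
    · exact continuous_fst.mul (Complex.continuous_im.comp (continuous_const.mul hDC))
    · exact Complex.continuous_im.comp (continuous_const.mul
        (Complex.continuous_conj.comp hFc))
    · exact (continuous_fst.pow 2).mul (Complex.continuous_im.comp
        ((Complex.continuous_conj.comp hFc).mul hDC))
  -- dominated convergence
  have hTend : Filter.Tendsto (fun r : ℝ => ∫ ω, G r ω ∂μ)
      (nhdsWithin 0 (Set.Ioi 0)) (nhds (∫ ω, G 0 ω ∂μ)) := by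
    obtain ⟨M, hM⟩ := (isCompact_Icc.prod isCompact_univ).exists_bound_of_continuousOn
      (s := Set.Icc (-1:ℝ) 1 ×ˢ (Set.univ : Set (sphere (0:E3) 1))) hGc.continuousOn
    refine tendsto_integral_filter_of_dominated_convergence (fun _ => M) ?_ ?_ ?_ ?_
    · filter_upwards with r
      exact ((hGc.comp (Continuous.prodMk_right r)).aestronglyMeasurable)
    · filter_upwards [Ioo_mem_nhdsGT_of_mem (Set.left_mem_Ico.mpr one_pos)] with r hr
      filter_upwards with ω
      exact hM (r, ω) ⟨⟨le_of_lt (lt_of_lt_of_le (by norm_num) hr.1.le), hr.2.le⟩, trivial⟩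
    · exact integrable_const M
    · filter_upwards with ω
      exact ((hGc.comp (continuous_id.prodMk continuous_const)).tendsto 0).mono_left
        nhdsWithin_le_nhds
  -- value of ∫ G 0
  have hG0 : (∫ ω, G 0 ω ∂μ) = - deriv (fun s => ‖ψ0 s‖ ^ 2) t := by
    have hG0pt : (fun ω : sphere (0:E3) 1 => G 0 ω)
        = fun _ => (ℏ/m) * (-(cc * (starRingEnd ℂ) (F 0)).im) := by
      funext ω
      simp [hGdef]
    rw [hG0pt, integral_const, htv]
    have hIBCt : cc = -(m * g / (2 * π * ℏ ^ 2) : ℝ) * ψ0 t := hIBC t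
    have him : (cc * (starRingEnd ℂ) (F 0)).im = (m * g / (2 * π * ℏ ^ 2)) * P := by
      rw [hIBCt]
      set b : ℝ := m * g / (2 * π * ℏ ^ 2) with hb
      simp [hPdef, Complex.mul_im, Complex.conj_re, Complex.conj_im]
      ring
    rw [him]
    rw [measureReal_def, ← hκdef]
    simp only [smul_eq_mul]
    field_simp
  -- conclude
  rw [← hG0]
  refine hTend.congr' ?_
  filter_upwards [self_mem_nhdsWithin] with r hr
  have : (fun ω : sphere (0:E3) 1 => r ^ 2 * ((ℏ / m) *
      ((starRingEnd ℂ) (ψ1 (r • (ω : E3)) t) *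
        deriv (fun s : ℝ => ψ1 (s • (ω : E3)) t) r).im)) = fun ω => G r ω :=
    funext (fun ω => hpt r hr ω)
  rw [this]
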